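/- arXiv:math/0006153 — 5 statements merged into one kernel-verified Lean document; each statement's English description precedes it below -/
import Mathlib

section
/- For every r ≥ 0, if y^i, y^f ∈ U^e_L(N) then Z^N_{2r}(y^i → y^f) = V(y^i) · ((T_N^{e·e})^r)_{y^i,y^f}, and if y^i, y^f ∈ U^o_L(N) then Z^N_{2r}(y^i → y^f) = V(y^i) · ((T_N^{o·o})^r)_{y^i,y^f}, where V(y^i) = ∏_{α=1}^N v(y^i_α). -/
open Finset BigOperators
open scoped Classical

noncomputable section

/-- The odd sites of the strip: `{y : 1 ≤ y ≤ L, y odd}`. -/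
def SetO (L : ℤ) : Finset ℤ := (Finset.Icc 1 L).filter (fun y => Odd y)

/-- The even sites of the strip: `{y : 0 ≤ y ≤ L, y even}`. -/
def SetE (L : ℤ) : Finset ℤ := (Finset.Icc 0 L).filter (fun y => Even y)

/-- Parity-indexed site sets: `true ↦ odd`, `false ↦ even`. -/
def Sp (L : ℤ) : Bool → Finset ℤ := fun p => if p then SetO L else SetE L

/-- Strictly increasing `N`-tuples with entries in `S`. -/
def UU {α : Type*} [LinearOrder α] (S : Finset α) (N : ℕ) : Finset (Fin N → α) :=
  (Fintype.piFinset (fun _ => S)).filter (fun y => ∀ i j : Fin N, i < j → y i < y j)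

/-- One-step transfer matrix entry: `w y y'` when `|y - y'| = 1`, and `0` otherwise. -/
def T1 (w : ℤ → ℤ → ℂ) (y y' : ℤ) : ℂ := if |y - y'| = 1 then w y y' else 0

/-- `N`-walk transfer matrix entry: product of one-step entries. -/
def TN (w : ℤ → ℤ → ℂ) {N : ℕ} (y y' : Fin N → ℤ) : ℂ := ∏ i, T1 w (y i) (y' i)

/-- Powers of a matrix indexed by a finite set `S`. -/
def matPow {α : Type*} [DecidableEq α] (S : Finset α) (M : α → α → ℂ) : ℕ → α → α → ℂ
  | 0 => fun y y' => if y = y' then 1 else 0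
  | r + 1 => fun y y' => ∑ z ∈ S, matPow S M r y z * M z y'

/-- Weight of a family of `N` walks of length `t`. -/
def walkWeight (w : ℤ → ℤ → ℂ) (v : ℤ → ℂ) {N t : ℕ} (y : Fin N → Fin (t + 1) → ℤ) : ℂ :=
  (∏ j, v (y j 0)) * ∏ m : Fin t, ∏ j, w (y j m.castSucc) (y j m.succ)

/-- The constraints on families of non-intersecting walks in the strip `0 ≤ y ≤ L`. -/
def stripCond (L : ℤ) {N t : ℕ} (yi yf : Fin N → ℤ) (y : Fin N → Fin (t + 1) → ℤ) : Prop :=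
  (∀ j, y j 0 = yi j) ∧ (∀ j, y j (Fin.last t) = yf j) ∧
    (∀ j m, 0 ≤ y j m ∧ y j m ≤ L) ∧
    (∀ j, ∀ m : Fin t, y j m.succ = y j m.castSucc + 1 ∨ y j m.succ = y j m.castSucc - 1) ∧
    (∀ m, ∀ i j : Fin N, i < j → y i m < y j m)

/-- The `N`-walk strip generating function `Z^N_t(y^i → y^f)`. -/
def Zgen (L : ℤ) (w : ℤ → ℤ → ℂ) (v : ℤ → ℂ) (N t : ℕ) (yi yf : Fin N → ℤ) : ℂ :=
  ∑ y ∈ (Fintype.piFinset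
      (fun _ : Fin N => Fintype.piFinset (fun _ : Fin (t + 1) => Finset.Icc 0 L))).filter
        (stripCond L yi yf), walkWeight w v y

/-- The constraints on families of non-intersecting walks with a single wall `y ≥ 0`. -/
def barCond {N t : ℕ} (yi yf : Fin N → ℤ) (y : Fin N → Fin (t + 1) → ℤ) : Prop :=
  (∀ j, y j 0 = yi j) ∧ (∀ j, y j (Fin.last t) = yf j) ∧
    (∀ j m, 0 ≤ y j m) ∧
    (∀ j, ∀ m : Fin t, y j m.succ = y j m.castSucc + 1 ∨ y j m.succ = y j m.castSucc - 1) ∧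
    (∀ m, ∀ i j : Fin N, i < j → y i m < y j m)

/-- The one-wall `N`-walk generating function `Z̄^N_t(y^i → y^f)`. -/
def Zbar (w : ℤ → ℤ → ℂ) (v : ℤ → ℂ) (N t : ℕ) (yi yf : Fin N → ℤ) : ℂ :=
  ∑ᶠ (y : Fin N → Fin (t + 1) → ℤ) (_ : barCond yi yf y), walkWeight w v y

/-- The Bethe Ansatz determinant built from a family of one-walk vectors. -/
def BA {K X : Type*} {N : ℕ} (φ : K → X → ℂ) (k : Fin N → K) (y : Fin N → X) : ℂ :=
  ∑ σ : Equiv.Perm (Fin N), ((Equiv.Perm.sign σ : ℤ) : ℂ) * ∏ a, φ (k (σ a)) (y a)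

end

/-!
Reading a family of `N` walks time slice by time slice turns it into a path of `t + 1`
configurations in `U_L(N)` of the whole strip, whose weight is `V(y^i)` times the product of
the entries of `T_N` along the path; since `T1` vanishes off nearest-neighbour pairs, `T_N`
itself enforces the step constraint. Hence `Z^N_t = V(y^i) · (T_N^t)_{y^i, y^f}`. Every step
flips the parity of every walker, so after an even number of steps only configurations of the
parity of `y^f` contribute, and `T_N^{2r}` restricted to them is the `r`-th power of the
two-step matrix.
-/

lemma mem_UU {α : Type*} [LinearOrder α] {S : Finset α} {N : ℕ} {y : Fin N → α} :
    y ∈ UU S N ↔ (∀ i, y i ∈ S) ∧ ∀ i j : Fin N, i < j → y i < y j := by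
  simp [UU, Fintype.mem_piFinset]

lemma UU_mono {α : Type*} [LinearOrder α] {S S' : Finset α} (h : S ⊆ S') {N : ℕ} :
    UU S N ⊆ UU S' N := fun _ hy =>
  mem_UU.mpr ⟨fun i => h ((mem_UU.mp hy).1 i), (mem_UU.mp hy).2⟩

lemma abs_sub_eq_one_iff {a b : ℤ} : |a - b| = 1 ↔ b = a + 1 ∨ b = a - 1 := by
  rw [abs_eq zero_le_one]
  omega

section TransferMatrix

variable {w : ℤ → ℤ → ℂ} {N : ℕ} {x y : Fin N → ℤ}

lemma abs_sub_eq_one_of_TN_ne_zero (h : TN w x y ≠ 0) (j : Fin N) : |x j - y j| = 1 := by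
  by_contra hj
  exact h (prod_eq_zero (mem_univ j) (if_neg hj))

lemma TN_eq_prod_of_abs_sub_eq_one (h : ∀ j, |x j - y j| = 1) :
    TN w x y = ∏ j, w (x j) (y j) :=
  prod_congr rfl fun j _ => if_pos (h j)

lemma mem_UU_of_TN_ne_zero {S A B : Finset ℤ}
    (hAB : ∀ a ∈ S, ∀ b ∈ A, |a - b| = 1 → a ∈ B)
    (hx : x ∈ UU S N) (hy : y ∈ UU A N) (h : TN w x y ≠ 0) : x ∈ UU B N := by
  rw [mem_UU] at hx hy ⊢
  exact ⟨fun j => hAB _ (hx.1 j) _ (hy.1 j) (abs_sub_eq_one_of_TN_ne_zero h j), hx.2⟩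

end TransferMatrix

section Paths

variable {α : Type*} [DecidableEq α] (S : Finset α) (M : α → α → ℂ)

lemma matPow_succ (r : ℕ) (a b : α) :
    matPow S M (r + 1) a b = ∑ z ∈ S, matPow S M r a z * M z b := rfl

def pathSum (t : ℕ) (a b : α) : ℂ :=
  ∑ c ∈ (Fintype.piFinset fun _ : Fin (t + 1) => S).filter
      (fun c => c 0 = a ∧ c (Fin.last t) = b),
    ∏ m : Fin t, M (c m.castSucc) (c m.succ)

lemma pathSum_zero {a b : α} (hb : b ∈ S) : pathSum S M 0 a b = if a = b then 1 else 0 := by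
  rw [pathSum]
  split_ifs with hab
  · subst hab
    rw [sum_eq_single_of_mem (fun _ => a) (by simp [hb])]
    · simp
    · intro c hc hne
      simp only [mem_filter] at hc
      exact absurd (funext fun m => by rw [Fin.fin_one_eq_zero m, hc.2.1]) hne
  · refine sum_eq_zero fun c hc => ?_
    simp only [mem_filter] at hc
    exact absurd (hc.2.1.symm.trans hc.2.2) hab

lemma pathSum_succ (t : ℕ) (a : α) {b : α} (hb : b ∈ S) :
    pathSum S M (t + 1) a b = ∑ z ∈ S, pathSum S M t a z * M z b := by
  rw [pathSum, ← sum_fiberwise_of_maps_to (g := fun c => c (Fin.last t).castSucc) (t := S)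
    fun c hc => Fintype.mem_piFinset.mp (mem_filter.mp hc).1 _]
  refine sum_congr rfl fun z _ => ?_
  rw [pathSum, sum_mul]
  symm
  refine sum_nbij' (fun c => Fin.snoc c b) Fin.init ?_ ?_ ?_ ?_ ?_
  · intro c hc
    simp only [mem_filter, Fintype.mem_piFinset] at hc ⊢
    refine ⟨⟨fun m => ?_, ?_, Fin.snoc_last _ _⟩, by rw [Fin.snoc_castSucc, hc.2.2]⟩
    · exact Fin.lastCases (by simpa using hb) (fun i => by simpa using hc.1 i) m
    · rw [← Fin.castSucc_zero, Fin.snoc_castSucc, hc.2.1]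
  · intro c hc
    simp only [mem_filter, Fintype.mem_piFinset] at hc ⊢
    exact ⟨fun m => hc.1.1 _, hc.1.2.1, hc.2⟩
  · intro c _
    exact Fin.init_snoc _ _
  · intro c hc
    simp only [mem_filter] at hc
    rw [← hc.1.2.2]
    exact Fin.snoc_init_self c
  · intro c hc
    simp only [mem_filter] at hc
    simp only [Fin.prod_univ_castSucc, Fin.succ_castSucc, Fin.snoc_castSucc, Fin.succ_last,
      Fin.snoc_last, hc.2.2]

lemma pathSum_eq_matPow (t : ℕ) (a : α) {b : α} (hb : b ∈ S) :
    pathSum S M t a b = matPow S M t a b := by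
  induction t generalizing b with
  | zero => rw [pathSum_zero S M hb, matPow]
  | succ t ih =>
    rw [pathSum_succ S M t a hb, matPow_succ]
    exact sum_congr rfl fun z hz => by rw [ih hz]

theorem matPow_two_mul_eq_matPow_two_step {A B : Finset α} (hA : A ⊆ S) (hB : B ⊆ S)
    (hBA : ∀ x ∈ S, ∀ y ∈ A, M x y ≠ 0 → x ∈ B) (hAB : ∀ x ∈ S, ∀ y ∈ B, M x y ≠ 0 → x ∈ A)
    (r : ℕ) (a : α) {b : α} (hb : b ∈ A) :
    matPow S M (2 * r) a b = matPow A (fun x y => ∑ z ∈ B, M x z * M z y) r a b := by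
  induction r generalizing b with
  | zero => rfl
  | succ r ih =>
    have restrict : ∀ {C : Finset α}, C ⊆ S → ∀ (f : α → ℂ) {y : α},
        (∀ x ∈ S, M x y ≠ 0 → x ∈ C) → ∑ x ∈ S, f x * M x y = ∑ x ∈ C, f x * M x y :=
      fun hC f y h => (sum_subset hC fun x hxS hxC =>
        by rw [of_not_not (mt (h x hxS) hxC), mul_zero]).symm
    calc matPow S M (2 * (r + 1)) a b
        = ∑ z ∈ B, (∑ x ∈ A, matPow S M (2 * r) a x * M x z) * M z b := by
          rw [show 2 * (r + 1) = 2 * r + 1 + 1 by ring, matPow_succ, restrict hB _ (hBA · · b hb)]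
          exact sum_congr rfl fun z hz => by rw [matPow_succ, restrict hA _ (hAB · · z hz)]
      _ = ∑ x ∈ A, matPow A (fun x y => ∑ z ∈ B, M x z * M z y) r a x *
            ∑ z ∈ B, M x z * M z b := by
          simp only [sum_mul, mul_sum, mul_assoc]
          rw [sum_comm]
          exact sum_congr rfl fun x hx => sum_congr rfl fun z _ => by rw [ih hx]
      _ = matPow A (fun x y => ∑ z ∈ B, M x z * M z y) (r + 1) a b := (matPow_succ ..).symm

end Paths

lemma SetE_subset_Icc (L : ℤ) : SetE L ⊆ Icc 0 L := filter_subset _ _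

lemma SetO_subset_Icc (L : ℤ) : SetO L ⊆ Icc 0 L := fun y hy => by
  simp only [SetO, mem_filter, mem_Icc] at hy ⊢
  omega

lemma mem_SetO_of_abs_sub_eq_one {L x y : ℤ} (hx : x ∈ Icc 0 L) (hy : y ∈ SetE L)
    (h : |x - y| = 1) : x ∈ SetO L := by
  simp only [SetE, SetO, mem_filter, mem_Icc, Int.even_iff, Int.odd_iff] at hx hy ⊢
  rcases abs_sub_eq_one_iff.mp h with h | h <;> omega

lemma mem_SetE_of_abs_sub_eq_one {L x y : ℤ} (hx : x ∈ Icc 0 L) (hy : y ∈ SetO L)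
    (h : |x - y| = 1) : x ∈ SetE L := by
  simp only [SetE, SetO, mem_filter, mem_Icc, Int.even_iff, Int.odd_iff] at hx hy ⊢
  rcases abs_sub_eq_one_iff.mp h with h | h <;> omega

theorem Zgen_eq_pathSum (L : ℤ) (w : ℤ → ℤ → ℂ) (v : ℤ → ℂ) (N t : ℕ) (yi yf : Fin N → ℤ) :
    Zgen L w v N t yi yf = (∏ a, v (yi a)) * pathSum (UU (Icc 0 L) N) (TN w) t yi yf := by
  have only_steps : pathSum (UU (Icc 0 L) N) (TN w) t yi yf =
      ∑ c ∈ ((Fintype.piFinset fun _ : Fin (t + 1) => UU (Icc 0 L) N).filter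
          (fun c => c 0 = yi ∧ c (Fin.last t) = yf)).filter
          (fun c => ∀ m : Fin t, ∀ j, |c m.castSucc j - c m.succ j| = 1),
        ∏ m : Fin t, TN w (c m.castSucc) (c m.succ) := by
    refine (sum_filter_of_ne fun c _ hc m => ?_).symm
    exact abs_sub_eq_one_of_TN_ne_zero (prod_ne_zero_iff.mp hc m (mem_univ m))
  rw [Zgen, only_steps, mul_sum]
  refine sum_nbij' Function.swap Function.swap ?_ ?_ (fun _ _ => rfl) (fun _ _ => rfl) ?_
  · intro y hy
    simp only [mem_filter, stripCond, Fintype.mem_piFinset, mem_UU, mem_Icc, Function.swap,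
      funext_iff, abs_sub_eq_one_iff] at hy ⊢
    obtain ⟨-, hi, hf, hbd, hstep, hlt⟩ := hy
    exact ⟨⟨fun m => ⟨fun j => hbd j m, hlt m⟩, hi, hf⟩, fun m j => hstep j m⟩
  · intro c hc
    simp only [mem_filter, stripCond, Fintype.mem_piFinset, mem_UU, mem_Icc, Function.swap,
      funext_iff, abs_sub_eq_one_iff] at hc ⊢
    obtain ⟨⟨hbd, hi, hf⟩, hstep⟩ := hc
    exact ⟨fun j m => (hbd m).1 j, hi, hf, fun j m => (hbd m).1 j, fun j m => hstep m j,
      fun m => (hbd m).2⟩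
  · intro y hy
    obtain ⟨-, hi, -, -, hstep, -⟩ := mem_filter.mp hy
    rw [walkWeight]
    congr 1
    · exact prod_congr rfl fun j _ => by rw [hi]
    · refine prod_congr rfl fun m _ => (TN_eq_prod_of_abs_sub_eq_one fun j => ?_).symm
      exact abs_sub_eq_one_iff.mpr (hstep j m)

theorem Zgen_two_mul_eq_matPow {L : ℤ} {A B : Finset ℤ} (hA : A ⊆ Icc 0 L) (hB : B ⊆ Icc 0 L)
    (hBA : ∀ x ∈ Icc 0 L, ∀ y ∈ A, |x - y| = 1 → x ∈ B)
    (hAB : ∀ x ∈ Icc 0 L, ∀ y ∈ B, |x - y| = 1 → x ∈ A)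
    (w : ℤ → ℤ → ℂ) (v : ℤ → ℂ) (N r : ℕ) (yi : Fin N → ℤ) {yf : Fin N → ℤ}
    (hyf : yf ∈ UU A N) :
    Zgen L w v N (2 * r) yi yf = (∏ a, v (yi a)) *
      matPow (UU A N) (fun y y' => ∑ z ∈ UU B N, TN w y z * TN w z y') r yi yf := by
  rw [Zgen_eq_pathSum, pathSum_eq_matPow _ _ _ _ (UU_mono hA hyf),
    matPow_two_mul_eq_matPow_two_step _ _ (UU_mono hA) (UU_mono hB)
      (fun _ hx _ hy => mem_UU_of_TN_ne_zero hBA hx hy)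
      (fun _ hx _ hy => mem_UU_of_TN_ne_zero hAB hx hy) r yi hyf]

theorem Zgen_even_matPow_general (L : ℤ) (w : ℤ → ℤ → ℂ) (v : ℤ → ℂ)
    (N : ℕ) (r : ℕ) (yi yf : Fin N → ℤ) :
    (yi ∈ UU (SetE L) N → yf ∈ UU (SetE L) N →
      Zgen L w v N (2 * r) yi yf =
        (∏ a, v (yi a)) *
          matPow (UU (SetE L) N)
            (fun y y' => ∑ z ∈ UU (SetO L) N, TN w y z * TN w z y') r yi yf) ∧
    (yi ∈ UU (SetO L) N → yf ∈ UU (SetO L) N →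
      Zgen L w v N (2 * r) yi yf =
        (∏ a, v (yi a)) *
          matPow (UU (SetO L) N)
            (fun y y' => ∑ z ∈ UU (SetE L) N, TN w y z * TN w z y') r yi yf) :=
  ⟨fun _ hyf => Zgen_two_mul_eq_matPow (SetE_subset_Icc L) (SetO_subset_Icc L)
      (fun _ hx _ hy => mem_SetO_of_abs_sub_eq_one hx hy)
      (fun _ hx _ hy => mem_SetE_of_abs_sub_eq_one hx hy) w v N r yi hyf,
    fun _ hyf => Zgen_two_mul_eq_matPow (SetO_subset_Icc L) (SetE_subset_Icc L)
      (fun _ hx _ hy => mem_SetE_of_abs_sub_eq_one hx hy)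
      (fun _ hx _ hy => mem_SetO_of_abs_sub_eq_one hx hy) w v N r yi hyf⟩

/-- the even-length generating function is a matrix element of a power of the
two-step transfer matrix, times the initial weight `V(y^i)`. -/
theorem Zgen_even_matPow (L : ℤ) (hL : Odd L) (hL1 : 1 ≤ L) (w : ℤ → ℤ → ℂ) (v : ℤ → ℂ)
    (N : ℕ) (hN : 1 ≤ N) (r : ℕ) (yi yf : Fin N → ℤ) :
    (yi ∈ UU (SetE L) N → yf ∈ UU (SetE L) N →
      Zgen L w v N (2 * r) yi yf =
        (∏ a, v (yi a)) *
          matPow (UU (SetE L) N)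
            (fun y y' => ∑ z ∈ UU (SetO L) N, TN w y z * TN w z y') r yi yf) ∧
    (yi ∈ UU (SetO L) N → yf ∈ UU (SetO L) N →
      Zgen L w v N (2 * r) yi yf =
        (∏ a, v (yi a)) *
          matPow (UU (SetO L) N)
            (fun y y' => ∑ z ∈ UU (SetE L) N, TN w y z * TN w z y') r yi yf) :=
  Zgen_even_matPow_general L w v N r yi yf
end

section
/- Let K_1 be a finite linearly ordered set, X any type, f : K_1 → ℂ, and φ_k, ψ_k : X → ℂ for k ∈ K_1. For N-tuples y, y' ∈ X^N, Σ_{k ∈ K_N} f(k) Φ_k(y) Ψ_k(y') = Σ_{σ ∈ S_N} sgn(σ) ∏_{α=1}^N ( Σ_{k ∈ K_1} f(k) φ_k(y_α) ψ_k(y'_{σ(α)}) ); equivalently, the left side equals the determinant of the N×N matrix whose (α,β) entry is Σ_{k ∈ K_1} f(k) φ_k(y_α) ψ_k(y'_β). -/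
open Finset BigOperators
open scoped Classical

/-! With `A α k = f k * φ_k(y_α)` and `B k β = ψ_k(y'_β)`, the right-hand side is `det (A * B)`,
and the identity is the Cauchy–Binet formula: the `N × N` minors of `A` and `B` on the columns,
resp. rows, `k₁ < ⋯ < k_N` are `f(k) Φ_k(y)` and `Ψ_k(y')`. Cauchy–Binet itself follows by
expanding `det (A * B)` multilinearly over all tuples `r : Fin N → K`, discarding the non-injective
ones (repeated columns of `A`), and writing each injective `r` as a sorted tuple composed with a
permutation. -/

open Matrix

theorem mem_UU_univ_iff {K : Type*} [Fintype K] [LinearOrder K] {N : ℕ} {k : Fin N → K} :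
    k ∈ UU (univ : Finset K) N ↔ StrictMono k := by
  simp [UU, StrictMono]

theorem sum_injective_eq_sum_UU_sum_perm {K M : Type*} [Fintype K] [LinearOrder K]
    [AddCommMonoid M] {N : ℕ} (G : (Fin N → K) → M) :
    ∑ r ∈ univ.filter Function.Injective, G r =
      ∑ k ∈ UU (univ : Finset K) N, ∑ σ : Equiv.Perm (Fin N), G (k ∘ σ) := by
  rw [← sum_product']
  symm
  refine sum_bij (fun p _ => p.1 ∘ p.2) ?mem ?inj ?surj (fun _ _ => rfl)
  case mem =>
    rintro ⟨k, σ⟩ hp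
    have hk : StrictMono k := mem_UU_univ_iff.1 (mem_product.1 hp).1
    simpa using hk.injective.comp σ.injective
  case inj =>
    rintro ⟨k, σ⟩ hp ⟨k', σ'⟩ hp' h
    have hk : StrictMono k := mem_UU_univ_iff.1 (mem_product.1 hp).1
    have hk' : StrictMono k' := mem_UU_univ_iff.1 (mem_product.1 hp').1
    have hrange : Set.range k = Set.range k' := by
      rw [← σ.surjective.range_comp k, ← σ'.surjective.range_comp k']
      exact congrArg Set.range h
    obtain rfl : k = k' := (hk.range_inj hk').1 hrange
    obtain rfl : σ = σ' := Equiv.ext fun a => hk.injective (congrFun h a)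
    rfl
  case surj =>
    intro r hr
    have hsorted : StrictMono (r ∘ Tuple.sort r) :=
      (Tuple.monotone_sort r).strictMono_of_injective
        ((mem_filter.1 hr).2.comp (Tuple.sort r).injective)
    refine ⟨(r ∘ Tuple.sort r, (Tuple.sort r)⁻¹),
      mem_product.2 ⟨mem_UU_univ_iff.2 hsorted, mem_univ _⟩, ?_⟩
    ext a
    simp

theorem Matrix.det_mul_eq_sum_UU {K R : Type*} [Fintype K] [LinearOrder K] [CommRing R]
    {N : ℕ} (A : Matrix (Fin N) K R) (B : Matrix K (Fin N) R) :
    (A * B).det =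
      ∑ k ∈ UU (univ : Finset K) N, (A.submatrix id k).det * (B.submatrix k id).det := by
  have expand : (A * B).det = ∑ r : Fin N → K, (A.submatrix id r).det * ∏ i, B (r i) i := by
    simp only [det_apply', mul_apply, prod_univ_sum, mul_sum, Fintype.piFinset_univ, sum_mul,
      submatrix_apply, id, prod_mul_distrib, mul_assoc]
    exact sum_comm
  have vanish : ∀ r : Fin N → K, ¬ Function.Injective r → (A.submatrix id r).det = 0 := by
    intro r hr
    obtain ⟨a, b, hab, hne⟩ := Function.not_injective_iff.1 hr
    exact det_zero_of_column_eq hne fun i => by simp [hab]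
  calc (A * B).det
      = ∑ r ∈ univ.filter Function.Injective, (A.submatrix id r).det * ∏ i, B (r i) i := by
        rw [expand, sum_filter_of_ne fun r _ h => by_contra fun hr => h (by simp [vanish r hr])]
    _ = ∑ k ∈ UU (univ : Finset K) N, ∑ σ : Equiv.Perm (Fin N),
          (A.submatrix id (k ∘ σ)).det * ∏ i, B (k (σ i)) i :=
        sum_injective_eq_sum_UU_sum_perm _
    _ = ∑ k ∈ UU (univ : Finset K) N, (A.submatrix id k).det * (B.submatrix k id).det := by
        refine sum_congr rfl fun k _ => ?_
        have hperm : ∀ σ : Equiv.Perm (Fin N),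
            (A.submatrix id (k ∘ σ)).det = Equiv.Perm.sign σ * (A.submatrix id k).det :=
          fun σ => det_permute' σ (A.submatrix id k)
        simp only [hperm, det_apply' (B.submatrix k id), submatrix_apply, id, mul_sum]
        exact sum_congr rfl fun σ _ => by ring

theorem BA_eq_det {K X : Type*} {N : ℕ} (φ : K → X → ℂ) (k : Fin N → K) (y : Fin N → X) :
    BA φ k y = (Matrix.of fun i j => φ (k i) (y j)).det := by
  rw [det_apply']
  rfl

/-- the `k`-summation identity for Bethe Ansatz determinants (equation (17)
of the paper), in both permutation-sum and determinant form. -/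
theorem ksum_identity (K X : Type*) [Fintype K] [LinearOrder K] (N : ℕ)
    (f : K → ℂ) (φ ψ : K → X → ℂ) (y y' : Fin N → X) :
    (∑ k ∈ UU (Finset.univ : Finset K) N, (∏ a, f (k a)) * (BA φ k y * BA ψ k y') =
      ∑ σ : Equiv.Perm (Fin N), ((Equiv.Perm.sign σ : ℤ) : ℂ) *
        ∏ a, (∑ kk : K, f kk * φ kk (y a) * ψ kk (y' (σ a)))) ∧
    (∑ k ∈ UU (Finset.univ : Finset K) N, (∏ a, f (k a)) * (BA φ k y * BA ψ k y') =
      Matrix.det (Matrix.of fun a b : Fin N => ∑ kk : K, f kk * φ kk (y a) * ψ kk (y' b))) := by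
  set A : Matrix (Fin N) K ℂ := Matrix.of fun a kk => f kk * φ kk (y a)
  set B : Matrix K (Fin N) ℂ := Matrix.of fun kk b => ψ kk (y' b)
  have hAB : A * B = Matrix.of fun a b => ∑ kk : K, f kk * φ kk (y a) * ψ kk (y' b) := by
    ext a b
    simp [A, B, mul_apply]
  have hA : ∀ k : Fin N → K, (A.submatrix id k).det = (∏ a, f (k a)) * BA φ k y := by
    intro k
    have : A.submatrix id k = (Matrix.of fun i j => φ (k i) (y j))ᵀ * diagonal (f ∘ k) := by
      ext a b
      simp [A, mul_comm]
    rw [this, det_mul, det_transpose, det_diagonal, BA_eq_det, mul_comm]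
    rfl
  have hdet : ∑ k ∈ UU (Finset.univ : Finset K) N, (∏ a, f (k a)) * (BA φ k y * BA ψ k y') =
      Matrix.det (Matrix.of fun a b : Fin N => ∑ kk : K, f kk * φ kk (y a) * ψ kk (y' b)) := by
    rw [← hAB, det_mul_eq_sum_UU]
    refine sum_congr rfl fun k _ => ?_
    rw [hA, mul_assoc, BA_eq_det ψ]
    rfl
  refine ⟨?_, hdet⟩
  rw [hdet, ← det_transpose, det_apply']
  rfl
end

section
/- Sum-relaxation for banded matrices against alternating functions: let T be a matrix with rows indexed by S^o_L and columns by S^e_L such that T_{y,y'} = 0 whenever |y − y'| > 1, let g_1, …, g_N : S^e_L → ℂ, and let y = (y_1 < y_2 < ⋯ < y_N) be a strictly increasing N-tuple from S^o_L. Then Σ_{y' ∈ U^e_L(N)} ( ∏_{α=1}^N T_{y_α, y'_α} ) · det( g_β(y'_α) )_{α,β} = det( Σ_{y' ∈ S^e_L} T_{y_α, y'} g_β(y') )_{α,β}; that is, the sum over strictly increasing N-tuples y' may be replaced by independent sums over each coordinate. -/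
open Finset BigOperators
open scoped Classical

lemma det_row_expand {N : ℕ} (M : Matrix (Fin N) (Fin N) ℂ) :
    M.det = ∑ σ : Equiv.Perm (Fin N), ((Equiv.Perm.sign σ : ℤ) : ℂ) * ∏ i, M i (σ i) := by
  rw [← Matrix.det_transpose, Matrix.det_apply']
  rfl

/-- sum-relaxation for banded matrices against alternating functions: the sum
over strictly increasing tuples `y'` may be replaced by independent sums over each
coordinate. -/
theorem banded_sum_relaxation (L : ℤ) (hL : Odd L) (hL1 : 1 ≤ L) (N : ℕ) (hN : 1 ≤ N)
    (T : ℤ → ℤ → ℂ) (hT : ∀ y ∈ SetO L, ∀ y' ∈ SetE L, 1 < |y - y'| → T y y' = 0)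
    (g : Fin N → ℤ → ℂ) (y : Fin N → ℤ) (hy : y ∈ UU (SetO L) N) :
    ∑ y' ∈ UU (SetE L) N,
        (∏ a, T (y a) (y' a)) * Matrix.det (Matrix.of fun a b : Fin N => g b (y' a)) =
      Matrix.det (Matrix.of fun a b : Fin N => ∑ z ∈ SetE L, T (y a) z * g b z) := by
  -- membership facts about y
  simp only [UU, Finset.mem_filter, Fintype.mem_piFinset] at hy
  obtain ⟨hyO, hyinc⟩ := hy
  -- Step 1: expand the RHS determinant as a sum over all tuples f in (SetE L)^N
  have expand : Matrix.det (Matrix.of fun a b : Fin N => ∑ z ∈ SetE L, T (y a) z * g b z)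
      = ∑ f ∈ Fintype.piFinset (fun _ : Fin N => SetE L),
          (∏ a, T (y a) (f a)) * Matrix.det (Matrix.of fun a b : Fin N => g b (f a)) := by
    rw [det_row_expand]
    have h1 : ∀ σ : Equiv.Perm (Fin N),
        (∏ i, (Matrix.of fun a b : Fin N => ∑ z ∈ SetE L, T (y a) z * g b z) i (σ i))
        = ∑ f ∈ Fintype.piFinset (fun _ : Fin N => SetE L),
            ∏ i, T (y i) (f i) * g (σ i) (f i) := by
      intro σ
      simp only [Matrix.of_apply]
      rw [Finset.prod_univ_sum]
    simp only [h1, Finset.mul_sum]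
    rw [Finset.sum_comm]
    refine Finset.sum_congr rfl fun f _ => ?_
    rw [det_row_expand, Finset.mul_sum]
    refine Finset.sum_congr rfl fun σ _ => ?_
    simp only [Matrix.of_apply, Finset.prod_mul_distrib]
    ring
  rw [expand]
  -- Step 2: the sum over all tuples reduces to the sum over increasing tuples
  refine Finset.sum_subset ?_ ?_
  · intro f hf
    simp only [UU, Finset.mem_filter] at hf
    exact hf.1
  · intro f hfpi hfU
    by_contra hne
    -- every factor T (y a) (f a) is nonzero, hence |y a - f a| ≤ 1
    have hTne : ∀ a, T (y a) (f a) ≠ 0 := by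
      intro a ha
      exact hne (by rw [Finset.prod_eq_zero (Finset.mem_univ a) ha, zero_mul])
    rw [Fintype.mem_piFinset] at hfpi
    have hband : ∀ a, |y a - f a| ≤ 1 := by
      intro a
      by_contra h
      exact hTne a (hT (y a) (hyO a) (f a) (hfpi a) (by omega))
    -- parity and ordering facts
    have hyOdd : ∀ a, Odd (y a) := fun a => (Finset.mem_filter.mp (hyO a)).2
    have hfEven : ∀ a, Even (f a) := fun a => (Finset.mem_filter.mp (hfpi a)).2
    have hmono : ∀ a b : Fin N, a < b → f a ≤ f b := by
      intro a b hab
      have h1 := hyinc a b hab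
      obtain ⟨ka, hka⟩ := hyOdd a
      obtain ⟨kb, hkb⟩ := hyOdd b
      have h2 := abs_le.mp (hband a)
      have h3 := abs_le.mp (hband b)
      omega
    by_cases hinj : ∀ a b : Fin N, a < b → f a ≠ f b
    · -- then f is strictly increasing, contradicting f ∉ UU
      apply hfU
      simp only [UU, Finset.mem_filter, Fintype.mem_piFinset]
      refine ⟨hfpi, fun a b hab => lt_of_le_of_ne (hmono a b hab) (hinj a b hab)⟩
    · -- two equal coordinates: the determinant has two equal rows
      push_neg at hinj
      obtain ⟨a, b, hab, hfab⟩ := hinj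
      have hdet : Matrix.det (Matrix.of fun a b : Fin N => g b (f a)) = 0 := by
        apply Matrix.det_zero_of_row_eq (i := a) (j := b) (ne_of_lt hab)
        funext c
        simp [hfab]
      exact hne (by rw [hdet, mul_zero])
end

section
/- Bethe Ansatz cyclic relations (Theorem 1(a)): suppose that for every k ∈ K_1 the column vectors φ^o_k, φ^e_k satisfy T1^{eo} φ^o_k = λ_k φ^e_k and T1^{oe} φ^e_k = λ_k φ^o_k with λ_k ∈ ℂ. Then for every N ≥ 1 and every k ∈ K_N the Bethe Ansatz vectors satisfy T_N^{oe} Φ^e_k = Λ_k Φ^o_k and T_N^{eo} Φ^o_k = Λ_k Φ^e_k. -/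
open Finset BigOperators
open scoped Classical

lemma BA_det {K X : Type*} {N : ℕ} (φ : K → X → ℂ) (k : Fin N → K) (y : Fin N → X) :
    BA φ k y = Matrix.det (Matrix.of fun b a => φ (k b) (y a)) := by
  rw [Matrix.det_apply']
  rfl

lemma BA_zero {K X : Type*} {N : ℕ} (φ : K → X → ℂ) (k : Fin N → K) (y : Fin N → X)
    {i j : Fin N} (hij : i ≠ j) (hyy : y i = y j) : BA φ k y = 0 := by
  rw [BA_det]
  exact Matrix.det_zero_of_column_eq hij (fun b => by simp [hyy])

lemma cyclic_step {K : Type*} [Fintype K] {N : ℕ} (S T : Finset ℤ) (w : ℤ → ℤ → ℂ)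
    (φ ψ : K → ℤ → ℂ) (lam : K → ℂ)
    (h : ∀ k, ∀ y ∈ S, ∑ z ∈ T, T1 w y z * φ k z = lam k * ψ k y)
    (hgap : ∀ a ∈ S, ∀ b ∈ S, a ≠ b → 2 ≤ |a - b|)
    (k : Fin N → K) (y : Fin N → ℤ) (hy : y ∈ UU S N) :
    ∑ y' ∈ UU T N, TN w y y' * BA φ k y' = (∏ a, lam (k a)) * BA ψ k y := by
  rw [UU, Finset.mem_filter] at hy
  obtain ⟨hyS, hymono⟩ := hy
  have hyS' : ∀ a, y a ∈ S := fun a => (Fintype.mem_piFinset.mp hyS) a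
  -- extend the sum to all tuples with entries in T
  have hext : ∑ y' ∈ UU T N, TN w y y' * BA φ k y' =
      ∑ y' ∈ Fintype.piFinset (fun _ : Fin N => T), TN w y y' * BA φ k y' := by
    refine Finset.sum_subset (Finset.filter_subset _ _) ?_
    intro y' hy' hnot
    by_cases hT : TN w y y' = 0
    · simp [hT]
    · have hstep : ∀ a, |y a - y' a| = 1 := by
        intro a
        by_contra hc
        exact hT (Finset.prod_eq_zero (Finset.mem_univ a) (by simp [T1, hc]))
      have : ¬ ∀ i j : Fin N, i < j → y' i < y' j := fun hall =>
        hnot (Finset.mem_filter.mpr ⟨hy', hall⟩)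
      push_neg at this
      obtain ⟨i, j, hij, hle⟩ := this
      have hij' : i ≠ j := ne_of_lt hij
      have hgap' : 2 ≤ |y i - y j| := hgap _ (hyS' i) _ (hyS' j) (fun e => hij'.elim ?_)
      swap
      · exact absurd (hymono i j hij) (by rw [e]; exact lt_irrefl _)
      have h1 := (abs_eq (by norm_num : (0:ℤ) ≤ 1)).mp (hstep i)
      have h2 := (abs_eq (by norm_num : (0:ℤ) ≤ 1)).mp (hstep j)
      have hmono := hymono i j hij
      rw [le_abs] at hgap'
      have heq : y' i = y' j := by omega
      rw [BA_zero φ k y' hij' heq, mul_zero]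
  rw [hext]
  unfold TN BA
  simp only [Finset.mul_sum]
  rw [Finset.sum_comm]
  have key : ∀ σ : Equiv.Perm (Fin N),
      ∑ y' ∈ Fintype.piFinset (fun _ : Fin N => T),
        (∏ a, T1 w (y a) (y' a)) * (((Equiv.Perm.sign σ : ℤ) : ℂ) * ∏ a, φ (k (σ a)) (y' a))
      = ((Equiv.Perm.sign σ : ℤ) : ℂ) *
          ((∏ a, lam (k a)) * ∏ a, ψ (k (σ a)) (y a)) := by
    intro σ
    have : ∑ y' ∈ Fintype.piFinset (fun _ : Fin N => T),
        (∏ a, T1 w (y a) (y' a)) * (((Equiv.Perm.sign σ : ℤ) : ℂ) * ∏ a, φ (k (σ a)) (y' a))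
        = ((Equiv.Perm.sign σ : ℤ) : ℂ) * ∑ y' ∈ Fintype.piFinset (fun _ : Fin N => T),
            ∏ a, (T1 w (y a) (y' a) * φ (k (σ a)) (y' a)) := by
      rw [Finset.mul_sum]
      refine Finset.sum_congr rfl fun y' _ => ?_
      rw [Finset.prod_mul_distrib]; ring
    rw [this,
      show ∑ y' ∈ Fintype.piFinset (fun _ : Fin N => T),
          ∏ a, (T1 w (y a) (y' a) * φ (k (σ a)) (y' a))
        = ∏ a, ∑ z ∈ T, T1 w (y a) z * φ (k (σ a)) z from
        (Finset.prod_univ_sum (fun _ : Fin N => T)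
          (fun a z => T1 w (y a) z * φ (k (σ a)) z)).symm]
    have hprod : ∀ a : Fin N, ∑ z ∈ T, T1 w (y a) z * φ (k (σ a)) z
        = lam (k (σ a)) * ψ (k (σ a)) (y a) := fun a => h _ _ (hyS' a)
    rw [Finset.prod_congr rfl fun a _ => hprod a, Finset.prod_mul_distrib]
    have : ∏ a, lam (k (σ a)) = ∏ a, lam (k a) := Equiv.prod_comp σ (fun a => lam (k a))
    rw [this]
  rw [Finset.sum_congr rfl fun σ _ => key σ]
  exact Finset.sum_congr rfl fun σ _ => by ring

lemma parity_gap {L : ℤ} : (∀ a ∈ SetO L, ∀ b ∈ SetO L, a ≠ b → 2 ≤ |a - b|) ∧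
    (∀ a ∈ SetE L, ∀ b ∈ SetE L, a ≠ b → 2 ≤ |a - b|) := by
  constructor <;> intro a ha b hb hne <;>
    simp only [SetO, SetE, Finset.mem_filter, Finset.mem_Icc] at ha hb
  · obtain ⟨-, m, hm⟩ := ha; obtain ⟨-, n, hn⟩ := hb; rw [le_abs]; omega
  · obtain ⟨-, m, hm⟩ := ha; obtain ⟨-, n, hn⟩ := hb
    rw [le_abs]; omega

/-- Bethe Ansatz cyclic relations (Theorem 1(a)): the Bethe Ansatz vectors
satisfy `T_N^{oe} Φ^e_k = Λ_k Φ^o_k` and `T_N^{eo} Φ^o_k = Λ_k Φ^e_k`. -/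
theorem bethe_cyclic_relations (L : ℤ) (hL : Odd L) (hL1 : 1 ≤ L) (w : ℤ → ℤ → ℂ)
    (K : Type*) [Fintype K] [LinearOrder K] (φo φe : K → ℤ → ℂ) (lam : K → ℂ)
    (heo : ∀ k, ∀ y ∈ SetE L, ∑ y' ∈ SetO L, T1 w y y' * φo k y' = lam k * φe k y)
    (hoe : ∀ k, ∀ y ∈ SetO L, ∑ y' ∈ SetE L, T1 w y y' * φe k y' = lam k * φo k y)
    (N : ℕ) (hN : 1 ≤ N) (k : Fin N → K) (hk : k ∈ UU (Finset.univ : Finset K) N) :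
    (∀ y ∈ UU (SetO L) N,
        ∑ y' ∈ UU (SetE L) N, TN w y y' * BA φe k y' = (∏ a, lam (k a)) * BA φo k y) ∧
    (∀ y ∈ UU (SetE L) N,
        ∑ y' ∈ UU (SetO L) N, TN w y y' * BA φo k y' = (∏ a, lam (k a)) * BA φe k y) := by
  refine ⟨fun y hy => ?_, fun y hy => ?_⟩
  · exact cyclic_step (SetO L) (SetE L) w φe φo lam hoe parity_gap.1 k y hy
  · exact cyclic_step (SetE L) (SetO L) w φo φe lam heo parity_gap.2 k y hy
end

section
/- Gessel–Viennot determinant via the Bethe Ansatz (Theorem 2): under the one-walk Bethe hypotheses, for every N ≥ 1, t ≥ 0, y^i ∈ U^{p'}_L(N) and y^f ∈ U^p_L(N) (where p' = p if t is even and p' is the opposite parity to p if t is odd), the N-walk strip generating function equals the determinant of one-walk strip generating functions: Z^N_t(y^i → y^f) = det( Z^S_t(y^i_α → y^f_β) )_{α,β = 1,…,N}. -/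
open Finset BigOperators
open scoped Classical

/-! The Lindström–Gessel–Viennot argument. Expanding the determinant gives a signed sum over
families of single walks from `yi (σ k)` to `yf k`. Exchanging the initial segments of two walks
that meet at the earliest collision time is a weight-preserving involution on the intersecting
families that changes `σ` by a transposition, so only non-intersecting families survive. With
`±1` steps and starting points of equal parity, the difference of two walks is even and moves by
at most `2` per step, so two walks that never meet never change their order: non-intersecting
families occur only for `σ = 1`, and they are exactly the ordered families counted by `Zgen`. -/

noncomputable section

namespace GesselViennot

open Equiv Function

variable {α R : Type*} [CommRing R] {N t : ℕ}

def pathWeight (w : α → α → R) (v : α → R) (g : Fin (t + 1) → α) : R :=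
  v (g 0) * ∏ m : Fin t, w (g m.castSucc) (g m.succ)

def paths (s : Finset α) (step : α → α → Prop) (t : ℕ) (a b : α) : Finset (Fin (t + 1) → α) :=
  {g ∈ Fintype.piFinset fun _ => s |
    g 0 = a ∧ g (Fin.last t) = b ∧ ∀ m : Fin t, step (g m.castSucc) (g m.succ)}

def pathSum (s : Finset α) (step : α → α → Prop) (t : ℕ) (w : α → α → R) (v : α → R)
    (a b : α) : R :=
  ∑ g ∈ paths s step t a b, pathWeight w v g

def families (s : Finset α) (step : α → α → Prop) (t : ℕ) (a b : Fin N → α) :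
    Finset (Fin N → Fin (t + 1) → α) :=
  Fintype.piFinset fun k => paths s step t (a k) (b k)

lemma mem_families {s : Finset α} {step : α → α → Prop} {a b : Fin N → α}
    {y : Fin N → Fin (t + 1) → α} :
    y ∈ families s step t a b ↔ ∀ k, (∀ m, y k m ∈ s) ∧ y k 0 = a k ∧
      y k (Fin.last t) = b k ∧ ∀ m : Fin t, step (y k m.castSucc) (y k m.succ) := by
  simp [families, paths]

def NonIntersecting (y : Fin N → Fin (t + 1) → α) : Prop :=
  ∀ m, Injective fun k => y k m

lemma prod_pathWeight (w : α → α → R) (v : α → R) (y : Fin N → Fin (t + 1) → α) :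
    ∏ k, pathWeight w v (y k) =
      (∏ k, v (y k 0)) * ∏ m : Fin t, ∏ k, w (y k m.castSucc) (y k m.succ) := by
  rw [← prod_comm, ← prod_mul_distrib]
  rfl

section SwapBefore

def swapBefore (i j : Fin N) (m₀ : Fin (t + 1)) (y : Fin N → Fin (t + 1) → α) :
    Fin N → Fin (t + 1) → α :=
  fun k m => if m ≤ m₀ then y (swap i j k) m else y k m

variable {i j : Fin N} {m₀ m : Fin (t + 1)} {y : Fin N → Fin (t + 1) → α}

lemma swapBefore_of_le (h : m ≤ m₀) (k : Fin N) : swapBefore i j m₀ y k m = y (swap i j k) m :=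
  if_pos h

lemma swapBefore_of_ge (hij : y i m₀ = y j m₀) (h : m₀ ≤ m) (k : Fin N) :
    swapBefore i j m₀ y k m = y k m := by
  unfold swapBefore
  split_ifs with h'
  · obtain rfl := le_antisymm h' h
    rw [swap_apply_def]
    split_ifs <;> simp_all
  · rfl

lemma swapBefore_swapBefore : swapBefore i j m₀ (swapBefore i j m₀ y) = y := by
  funext k m
  by_cases h : m ≤ m₀ <;> simp [swapBefore, h]

lemma exists_perm_swapBefore_step (hij : y i m₀ = y j m₀) (m : Fin t) :
    ∃ τ : Perm (Fin N), ∀ k, swapBefore i j m₀ y k m.castSucc = y (τ k) m.castSucc ∧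
      swapBefore i j m₀ y k m.succ = y (τ k) m.succ := by
  by_cases h : m.succ ≤ m₀
  · exact ⟨swap i j, fun k =>
      ⟨swapBefore_of_le ((Fin.castSucc_le_succ m).trans h) k, swapBefore_of_le h k⟩⟩
  · have h' : m₀ ≤ m.castSucc := Fin.le_castSucc_iff.2 (not_le.1 h)
    exact ⟨1, fun k => ⟨swapBefore_of_ge hij h' k,
      swapBefore_of_ge hij (h'.trans (Fin.castSucc_le_succ m)) k⟩⟩

lemma prod_pathWeight_swapBefore (hij : y i m₀ = y j m₀) (w : α → α → R) (v : α → R) :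
    ∏ k, pathWeight w v (swapBefore i j m₀ y k) = ∏ k, pathWeight w v (y k) := by
  rw [prod_pathWeight, prod_pathWeight]
  congr 1
  · simp_rw [swapBefore_of_le (Fin.zero_le m₀)]
    exact prod_comp (swap i j) fun k => v (y k 0)
  · refine prod_congr rfl fun m _ => ?_
    obtain ⟨τ, hτ⟩ := exists_perm_swapBefore_step hij m
    simp_rw [(hτ _).1, (hτ _).2]
    exact prod_comp τ fun k => w (y k m.castSucc) (y k m.succ)

lemma swapBefore_mem_families {s : Finset α} {step : α → α → Prop} {a b : Fin N → α}
    (hij : y i m₀ = y j m₀) (hy : y ∈ families s step t a b) :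
    swapBefore i j m₀ y ∈ families s step t (a ∘ swap i j) b := by
  rw [mem_families] at hy ⊢
  intro k
  refine ⟨fun m => ?_, ?_, ?_, fun m => ?_⟩
  · unfold swapBefore
    split_ifs
    exacts [(hy _).1 m, (hy _).1 m]
  · rw [swapBefore_of_le (Fin.zero_le _)]
    exact (hy _).2.1
  · rw [swapBefore_of_ge hij (Fin.le_last _)]
    exact (hy k).2.2.1
  · obtain ⟨τ, hτ⟩ := exists_perm_swapBefore_step hij m
    rw [(hτ k).1, (hτ k).2]
    exact (hy _).2.2.2 m

end SwapBefore

section FirstCollision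

variable {y : Fin N → Fin (t + 1) → α}

def IsFirstCollision (y : Fin N → Fin (t + 1) → α) (c : Fin (t + 1) × Fin N × Fin N) : Prop :=
  c.2.1 ≠ c.2.2 ∧ y c.2.1 c.1 = y c.2.2 c.1 ∧ ∀ m < c.1, Injective fun k => y k m

lemma exists_isFirstCollision (h : ¬ NonIntersecting y) : ∃ c, IsFirstCollision y c := by
  obtain ⟨m, hm, hmin⟩ := WellFounded.has_min wellFounded_lt {m | ¬ Injective fun k => y k m}
    (by simpa [NonIntersecting, Set.Nonempty] using h)
  obtain ⟨i, j, hij, hne⟩ := not_injective_iff.1 hm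
  exact ⟨(m, i, j), hne, hij, fun m' hm' => by_contra fun h' => hmin m' h' hm'⟩

lemma isFirstCollision_swapBefore {m₀ : Fin (t + 1)} {i j : Fin N}
    (hc : IsFirstCollision y (m₀, i, j)) :
    IsFirstCollision (swapBefore i j m₀ y) = IsFirstCollision y := by
  obtain ⟨-, hij, hmin⟩ := hc
  have inj_before : ∀ m < m₀, Injective fun k => swapBefore i j m₀ y k m := fun m hm => by
    simp_rw [swapBefore_of_le hm.le]
    exact (hmin m hm).comp (swap i j).injective
  have slice_after : ∀ m, m₀ ≤ m → (fun k => swapBefore i j m₀ y k m) = fun k => y k m :=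
    fun m hm => funext (swapBefore_of_ge hij hm)
  ext ⟨m, i', j'⟩
  rcases lt_or_ge m m₀ with hm | hm
  · exact iff_of_false (fun ⟨hne, heq, _⟩ => hne (inj_before m hm heq))
      (fun ⟨hne, heq, _⟩ => hne (hmin m hm heq))
  · simp only [IsFirstCollision, swapBefore_of_ge hij hm]
    refine and_congr_right' (and_congr_right' (forall₂_congr fun m' _ => ?_))
    rcases lt_or_ge m' m₀ with hm' | hm'
    · exact iff_of_true (inj_before m' hm') (hmin m' hm')
    · rw [slice_after m' hm']

/-- Any choice will do: `switchAtFirstCollision` leaves `IsFirstCollision y` unchanged, hence also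
this choice, which is what makes it an involution. -/
def firstCollision (y : Fin N → Fin (t + 1) → α) (h : ¬ NonIntersecting y) :
    Fin (t + 1) × Fin N × Fin N :=
  (exists_isFirstCollision h).choose

lemma isFirstCollision_firstCollision (h : ¬ NonIntersecting y) :
    IsFirstCollision y (firstCollision y h) :=
  (exists_isFirstCollision h).choose_spec

def switchAtFirstCollision (y : Fin N → Fin (t + 1) → α) (h : ¬ NonIntersecting y) :
    Fin N → Fin (t + 1) → α :=
  swapBefore (firstCollision y h).2.1 (firstCollision y h).2.2 (firstCollision y h).1 y

lemma isFirstCollision_switchAtFirstCollision (h : ¬ NonIntersecting y) :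
    IsFirstCollision (switchAtFirstCollision y h) = IsFirstCollision y :=
  isFirstCollision_swapBefore (isFirstCollision_firstCollision h)

lemma not_nonIntersecting_switchAtFirstCollision (h : ¬ NonIntersecting y) :
    ¬ NonIntersecting (switchAtFirstCollision y h) := by
  have hc := isFirstCollision_firstCollision h
  rw [← isFirstCollision_switchAtFirstCollision h] at hc
  exact fun hni => hc.1 (hni _ hc.2.1)

lemma firstCollision_switchAtFirstCollision (h : ¬ NonIntersecting y)
    (h' : ¬ NonIntersecting (switchAtFirstCollision y h)) :
    firstCollision (switchAtFirstCollision y h) h' = firstCollision y h := by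
  unfold firstCollision
  simp_rw [isFirstCollision_switchAtFirstCollision h]

lemma switchAtFirstCollision_switchAtFirstCollision (h : ¬ NonIntersecting y)
    (h' : ¬ NonIntersecting (switchAtFirstCollision y h)) :
    switchAtFirstCollision (switchAtFirstCollision y h) h' = y := by
  rw [switchAtFirstCollision, firstCollision_switchAtFirstCollision]
  exact swapBefore_swapBefore

end FirstCollision

lemma sum_sign_mul_prod_pathWeight_of_not_nonIntersecting (s : Finset α) (step : α → α → Prop)
    (w : α → α → R) (v : α → R) (a b : Fin N → α) :
    ∑ σ : Perm (Fin N), ∑ y ∈ families s step t (a ∘ σ) b with ¬ NonIntersecting y,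
      ((Perm.sign σ : ℤ) : R) * ∏ k, pathWeight w v (y k) = 0 := by
  rw [sum_sigma']
  set S := univ.sigma fun σ : Perm (Fin N) =>
    {y ∈ families s step t (a ∘ σ) b | ¬ NonIntersecting y}
  have mem_S {q} : q ∈ S ↔ q.2 ∈ families s step t (a ∘ q.1) b ∧ ¬ NonIntersecting q.2 := by
    simp [S]
  let c q (hq : q ∈ S) := firstCollision q.2 (mem_S.1 hq).2
  refine sum_involution (fun q hq => ⟨q.1 * swap (c q hq).2.1 (c q hq).2.2,
    switchAtFirstCollision q.2 (mem_S.1 hq).2⟩) ?_ ?_ ?_ ?_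
  · rintro ⟨σ, y⟩ hq
    obtain ⟨hne, hij, -⟩ := isFirstCollision_firstCollision (mem_S.1 hq).2
    simp only [c, switchAtFirstCollision, prod_pathWeight_swapBefore hij, Perm.sign_mul,
      Perm.sign_swap hne]
    push_cast
    ring
  · rintro ⟨σ, y⟩ hq - heq
    obtain ⟨hne, -, -⟩ := isFirstCollision_firstCollision (mem_S.1 hq).2
    simp only [Sigma.mk.injEq, mul_eq_left, swap_eq_one_iff] at heq
    exact hne heq.1
  · rintro ⟨σ, y⟩ hq
    obtain ⟨hy, hni⟩ := mem_S.1 hq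
    obtain ⟨-, hij, -⟩ := isFirstCollision_firstCollision hni
    refine mem_S.2 ⟨?_, not_nonIntersecting_switchAtFirstCollision hni⟩
    have := swapBefore_mem_families hij hy
    rw [Perm.coe_mul, ← comp_assoc]
    exact this
  · rintro ⟨σ, y⟩ hq
    dsimp only [c]
    simp_rw [firstCollision_switchAtFirstCollision, switchAtFirstCollision_switchAtFirstCollision,
      mul_swap_mul_self]

theorem det_pathSum (s : Finset α) (step : α → α → Prop) (w : α → α → R) (v : α → R)
    (a b : Fin N → α) :
    (Matrix.of fun i j => pathSum s step t w v (a i) (b j)).det =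
      ∑ σ : Perm (Fin N), ∑ y ∈ families s step t (a ∘ σ) b with NonIntersecting y,
        ((Perm.sign σ : ℤ) : R) * ∏ k, pathWeight w v (y k) := by
  calc _ = ∑ σ : Perm (Fin N), ∑ y ∈ families s step t (a ∘ σ) b,
          ((Perm.sign σ : ℤ) : R) * ∏ k, pathWeight w v (y k) := by
        simp_rw [Matrix.det_apply', families, ← mul_sum, ← prod_univ_sum]
        rfl
    _ = _ := by
        rw [← add_zero (∑ σ : Perm (Fin N), ∑ y ∈ _ with _, _),
          ← sum_sign_mul_prod_pathWeight_of_not_nonIntersecting (t := t) s step w v a b,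
          ← sum_add_distrib]
        exact sum_congr rfl fun σ _ => (sum_filter_add_sum_filter_not _ _ _).symm

section IntegerWalks

def PmStep (x x' : ℤ) : Prop := x' = x + 1 ∨ x' = x - 1

lemma lt_iff_lt_at_zero_of_pmStep {g h : Fin (t + 1) → ℤ}
    (hg : ∀ m : Fin t, PmStep (g m.castSucc) (g m.succ))
    (hh : ∀ m : Fin t, PmStep (h m.castSucc) (h m.succ))
    (hpar : Even (h 0 - g 0)) (hne : ∀ m, g m ≠ h m) (m : Fin (t + 1)) :
    g m < h m ↔ g 0 < h 0 := by
  rw [Int.even_iff] at hpar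
  suffices ∀ m, (h m - g m) % 2 = 0 ∧ (g m < h m ↔ g 0 < h 0) from (this m).2
  intro m
  induction m using Fin.induction with
  | zero => exact ⟨hpar, Iff.rfl⟩
  | succ m ih =>
    have := hne m.castSucc
    have := hne m.succ
    rcases hg m with h1 | h1 <;> rcases hh m with h2 | h2 <;> omega

variable {s : Finset ℤ} {a b : Fin N → ℤ} {y : Fin N → Fin (t + 1) → ℤ}

lemma strictMono_of_nonIntersecting (hy : y ∈ families s PmStep t a b)
    (hpar : ∀ i j, Even (a j - a i)) (hb : StrictMono b) (hni : NonIntersecting y)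
    (m : Fin (t + 1)) : StrictMono fun k => y k m := by
  rw [mem_families] at hy
  intro i j hij
  have key (m) := lt_iff_lt_at_zero_of_pmStep (hy i).2.2.2 (hy j).2.2.2
    (by rw [(hy i).2.1, (hy j).2.1]; exact hpar i j) (fun m h => hij.ne (hni m h)) m
  refine (key m).2 ((key (Fin.last t)).1 ?_)
  rw [(hy i).2.2.1, (hy j).2.2.1]
  exact hb hij

lemma nonIntersecting_iff_strictMono (hy : y ∈ families s PmStep t a b)
    (hpar : ∀ i j, Even (a j - a i)) (hb : StrictMono b) :
    NonIntersecting y ↔ ∀ m, StrictMono fun k => y k m :=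
  ⟨strictMono_of_nonIntersecting hy hpar hb, fun h m => (h m).injective⟩

lemma eq_one_of_nonIntersecting {σ : Perm (Fin N)} (ha : StrictMono a)
    (hpar : ∀ i j, Even (a j - a i)) (hb : StrictMono b)
    (hy : y ∈ families s PmStep t (a ∘ σ) b) (hni : NonIntersecting y) : σ = 1 := by
  have haσ : StrictMono (a ∘ σ) := by
    have h0 := strictMono_of_nonIntersecting hy (fun i j => hpar (σ i) (σ j)) hb hni 0
    rw [mem_families] at hy
    simpa only [(hy _).2.1] using h0
  have hσ : StrictMono σ := fun i j hij => ha.lt_iff_lt.1 (haσ hij)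
  exact Equiv.ext fun k => hσ.apply_eq

end IntegerWalks

end GesselViennot

end

open GesselViennot

lemma even_sub_of_mem_Sp {L a b : ℤ} {q : Bool} (ha : a ∈ Sp L q) (hb : b ∈ Sp L q) :
    Even (a - b) := by
  cases q <;>
    simp only [Sp, SetO, SetE, Bool.false_eq_true, if_true, if_false, mem_filter] at ha hb
  exacts [ha.2.sub hb.2, ha.2.sub_odd hb.2]

lemma Zgen_eq_sum_families (L : ℤ) (w : ℤ → ℤ → ℂ) (v : ℤ → ℂ) (N t : ℕ) (yi yf : Fin N → ℤ) :
    Zgen L w v N t yi yf = ∑ y ∈ families (Icc 0 L) PmStep t yi yf with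
      ∀ m, StrictMono fun k => y k m, ∏ k, pathWeight w v (y k) := by
  unfold Zgen
  refine sum_congr (ext fun y => ?_) fun y _ => ?_
  · simp only [mem_filter, mem_families, Fintype.mem_piFinset, stripCond, mem_Icc, forall_and]
    exact ⟨fun ⟨hs, h0, hl, _, hstep, hmono⟩ => ⟨⟨hs, h0, hl, hstep⟩, hmono⟩,
      fun ⟨⟨hs, h0, hl, hstep⟩, hmono⟩ => ⟨hs, h0, hl, hs, hstep, hmono⟩⟩
  · rw [prod_pathWeight]
    rfl

lemma Zgen_one_eq_pathSum (L : ℤ) (w : ℤ → ℤ → ℂ) (v : ℤ → ℂ) (t : ℕ) (a b : ℤ) :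
    Zgen L w v 1 t (fun _ => a) (fun _ => b) = pathSum (Icc 0 L) PmStep t w v a b := by
  rw [Zgen_eq_sum_families, filter_true_of_mem fun y _ m => Subsingleton.strictMono _, families,
    ← prod_univ_sum, Fin.prod_univ_one]
  rfl

theorem Zgen_gessel_viennot_general (L : ℤ) (w : ℤ → ℤ → ℂ) (v : ℤ → ℂ)
    (N : ℕ) (t : ℕ) (p : Bool) (yi yf : Fin N → ℤ)
    (hyi : yi ∈ UU (Sp L (if Even t then p else !p)) N) (hyf : yf ∈ UU (Sp L p) N) :
    Zgen L w v N t yi yf =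
      Matrix.det (Matrix.of fun a b : Fin N =>
        Zgen L w v 1 t (fun _ => yi a) (fun _ => yf b)) := by
  simp only [UU, mem_filter, Fintype.mem_piFinset] at hyi hyf
  have hpar : ∀ i j, Even (yi j - yi i) := fun i j => even_sub_of_mem_Sp (hyi.1 j) (hyi.1 i)
  have hyi_mono : StrictMono yi := fun i j => hyi.2 i j
  have hyf_mono : StrictMono yf := fun i j => hyf.2 i j
  simp_rw [Zgen_one_eq_pathSum]
  rw [det_pathSum, Fintype.sum_eq_single 1, Zgen_eq_sum_families]
  · simp only [Equiv.Perm.sign_one, Units.val_one, Int.cast_one, one_mul, Equiv.Perm.coe_one,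
      Function.comp_id]
    exact sum_congr (filter_congr fun y hy =>
      (nonIntersecting_iff_strictMono hy hpar hyf_mono).symm) fun _ _ => rfl
  · intro σ hσ
    refine sum_eq_zero fun y hy => absurd ?_ hσ
    exact eq_one_of_nonIntersecting hyi_mono hpar hyf_mono (mem_filter.1 hy).1 (mem_filter.1 hy).2

/-- Gessel–Viennot determinant via the Bethe Ansatz (Theorem 2): the
`N`-walk strip generating function is the determinant of one-walk strip generating
functions. Parity is encoded by a Boolean: `true ↦ odd`, `false ↦ even`. -/
theorem Zgen_gessel_viennot (L : ℤ) (hL : Odd L) (hL1 : 1 ≤ L) (w : ℤ → ℤ → ℂ) (v : ℤ → ℂ)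
    (K : Type*) [Fintype K] [LinearOrder K] (hK : Fintype.card K = ((L + 1) / 2).toNat)
    (φ ψ : Bool → K → ℤ → ℂ) (lam : K → ℂ)
    (heo : ∀ k, ∀ y ∈ SetE L, ∑ y' ∈ SetO L, T1 w y y' * φ true k y' = lam k * φ false k y)
    (hoe : ∀ k, ∀ y ∈ SetO L, ∑ y' ∈ SetE L, T1 w y y' * φ false k y' = lam k * φ true k y)
    (hort : ∀ (p : Bool) (k k' : K),
      ∑ y ∈ Sp L p, star (ψ p k y) * φ p k' y = if k = k' then 1 else 0)
    (hcomp : ∀ (p : Bool), ∀ y ∈ Sp L p, ∀ y' ∈ Sp L p,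
      ∑ k : K, φ p k y * star (ψ p k y') = if y = y' then 1 else 0)
    (N : ℕ) (hN : 1 ≤ N) (t : ℕ) (p : Bool) (yi yf : Fin N → ℤ)
    (hyi : yi ∈ UU (Sp L (if Even t then p else !p)) N) (hyf : yf ∈ UU (Sp L p) N) :
    Zgen L w v N t yi yf =
      Matrix.det (Matrix.of fun a b : Fin N =>
        Zgen L w v 1 t (fun _ => yi a) (fun _ => yf b)) :=
  Zgen_gessel_viennot_general L w v N t p yi yf hyi hyf
end
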